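/- Partial monotonicity of extensions: if E is an extension of both ⟨D,W'⟩ and ⟨D,W⟩ with W' ⊆ W, then E is an extension of ⟨D,W''⟩ for every W'' with W' ⊆ W'' ⊆ W. -/

import Mathlib

/-- A propositional clause: sets of positively and negatively occurring variables. -/
structure Clause (V : Type) where
  pos : Set V
  neg : Set V

/-- A model (set of variables assigned true) satisfies a clause. -/
def Clause.sat {V : Type} (M : Set V) (c : Clause V) : Prop :=
  (∃ x ∈ c.pos, x ∈ M) ∨ (∃ x ∈ c.neg, x ∉ M)

/-- Models of a CNF formula (set of clauses). -/
def ModOf {V : Type} (F : Set (Clause V)) : Set (Set V) :=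
  {M | ∀ c ∈ F, c.sat M}

/-- Minimal models of a formula, w.r.t. set inclusion. -/
def CIRC {V : Type} (F : Set (Clause V)) : Set (Set V) :=
  {M | M ∈ ModOf F ∧ ¬ ∃ M' ∈ ModOf F, M' ⊂ M}

/-- A default rule, represented semantically: precondition, justification and
consequence are given by their sets of models. -/
structure Default (V : Type) where
  prec : Set (Set V)
  just : Set (Set V)
  cons : Set (Set V)

/-- Models of the conjunction of the consequences of a sequence of defaults. -/
def consSet {V : Type} (p : List (Default V)) : Set (Set V) :=
  {M | ∀ d ∈ p, M ∈ d.cons}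

/-- Models of the conjunction of the justifications of a sequence of defaults. -/
def justSet {V : Type} (p : List (Default V)) : Set (Set V) :=
  {M | ∀ d ∈ p, M ∈ d.just}

/-- A process of ⟨D,W⟩: a duplicate-free sequence of defaults of D such that the
precondition of each default is entailed by W together with the consequences of
the preceding defaults. -/
def IsProcess {V : Type} (D : Set (Default V)) (W : Set (Clause V))
    (p : List (Default V)) : Prop :=
  p.Nodup ∧ (∀ d ∈ p, d ∈ D) ∧
  ∀ (i : ℕ) (h : i < p.length),
    ModOf W ∩ consSet (p.take i) ⊆ (p.get ⟨i, h⟩).prec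

/-- Success: W ∪ cons(p) is consistent with the justification of each default of p. -/
def Successful {V : Type} (W : Set (Clause V)) (p : List (Default V)) : Prop :=
  ∀ d ∈ p, (ModOf W ∩ consSet p ∩ d.just).Nonempty

/-- Local applicability of a default in a process. -/
def LocallyApplicable {V : Type} (W : Set (Clause V)) (p : List (Default V))
    (d : Default V) : Prop :=
  ModOf W ∩ consSet p ⊆ d.prec ∧ (ModOf W ∩ consSet p ∩ d.just).Nonempty

/-- Reiter semantics: selected processes. -/
def ReiterSelected {V : Type} (D : Set (Default V)) (W : Set (Clause V))
    (p : List (Default V)) : Prop :=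
  IsProcess D W p ∧ Successful W p ∧
  ∀ d ∈ D, d ∉ p → ¬ LocallyApplicable W p d

/-- Extensions (as sets of models, i.e. up to logical equivalence) in Reiter semantics. -/
def ReiterExtensions {V : Type} (D : Set (Default V)) (W : Set (Clause V)) :
    Set (Set (Set V)) :=
  {E | ∃ p, ReiterSelected D W p ∧ E = ModOf W ∩ consSet p}

/-! Let `Π` be a selected process of `⟨D,W'⟩` with `E = Mod(W' ∪ cons Π)`. As `E` is also an
extension of `⟨D,W⟩`, `E ⊆ Mod W ⊆ Mod W''`, hence `Mod(W'' ∪ cons Π) = E`. Preconditions stay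
entailed when `W'` grows to `W''`, and success and maximality depend on the facts only through
`Mod(W ∪ cons Π)`, so `Π` is a selected process of `⟨D,W''⟩` generating `E`. -/

section
variable {V : Type}

theorem modOf_anti {A B : Set (Clause V)} (h : A ⊆ B) : ModOf B ⊆ ModOf A :=
  fun _ hM c hc => hM c (h hc)

theorem IsProcess.mono {D : Set (Default V)} {W W' : Set (Clause V)} {p : List (Default V)}
    (hW : W ⊆ W') (hp : IsProcess D W p) : IsProcess D W' p :=
  ⟨hp.1, hp.2.1, fun i h => (Set.inter_subset_inter_left _ (modOf_anti hW)).trans (hp.2.2 i h)⟩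

theorem successful_congr {W W' : Set (Clause V)} {p : List (Default V)}
    (h : ModOf W ∩ consSet p = ModOf W' ∩ consSet p) : Successful W p ↔ Successful W' p := by
  simp only [Successful, h]

theorem locallyApplicable_congr {W W' : Set (Clause V)} {p : List (Default V)} {d : Default V}
    (h : ModOf W ∩ consSet p = ModOf W' ∩ consSet p) :
    LocallyApplicable W p d ↔ LocallyApplicable W' p d := by
  simp only [LocallyApplicable, h]

theorem ReiterSelected.of_subset {D : Set (Default V)} {W W' : Set (Clause V)}
    {p : List (Default V)} (hW : W ⊆ W') (h : ModOf W ∩ consSet p = ModOf W' ∩ consSet p)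
    (hp : ReiterSelected D W p) : ReiterSelected D W' p :=
  ⟨hp.1.mono hW, (successful_congr h).1 hp.2.1,
    fun d hd hdp => (locallyApplicable_congr h).not.1 (hp.2.2 d hd hdp)⟩

theorem subset_modOf_of_mem_reiterExtensions {D : Set (Default V)} {W : Set (Clause V)}
    {E : Set (Set V)} (hE : E ∈ ReiterExtensions D W) : E ⊆ ModOf W := by
  obtain ⟨p, -, rfl⟩ := hE
  exact Set.inter_subset_left

theorem modOf_inter_consSet_eq_of_subset_of_subset {W' W'' W : Set (Clause V)}
    {p : List (Default V)} (h1 : W' ⊆ W'') (h2 : W'' ⊆ W)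
    (hW : ModOf W' ∩ consSet p ⊆ ModOf W) :
    ModOf W' ∩ consSet p = ModOf W'' ∩ consSet p :=
  Set.Subset.antisymm
    (fun _ hM => ⟨modOf_anti h2 (hW hM), hM.2⟩)
    (Set.inter_subset_inter_left _ (modOf_anti h1))

end

/-- Partial monotonicity of extensions. -/
theorem extension_continue {V : Type} (D : Set (Default V))
    (W' W'' W : Set (Clause V)) (h1 : W' ⊆ W'') (h2 : W'' ⊆ W)
    (E : Set (Set V))
    (hE' : E ∈ ReiterExtensions D W') (hE : E ∈ ReiterExtensions D W) :
    E ∈ ReiterExtensions D W'' := by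
  have hEW := subset_modOf_of_mem_reiterExtensions hE
  obtain ⟨p, hp, rfl⟩ := hE'
  have heq := modOf_inter_consSet_eq_of_subset_of_subset h1 h2 hEW
  exact ⟨p, hp.of_subset h1 heq, heq⟩
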